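/- For any real numbers α, β, γ, the two-qubit unitary U = exp(i(α σ_x ⊗ σ_x + β σ_y ⊗ σ_y + γ σ_z ⊗ σ_z)) has equal entangling and disentangling power: E↑(U) = E↓(U). -/

import Mathlib

open scoped BigOperators Matrix

/-- Von Neumann entropy in bits: `S(ρ) = -∑ᵢ λᵢ log₂ λᵢ` over the eigenvalues of `ρ`
(interpreted as `0` if `ρ` is not Hermitian). -/
noncomputable def vnEntropy {n : Type*} [Fintype n] [DecidableEq n]
    (ρ : Matrix n n ℂ) : ℝ :=
  if h : ρ.IsHermitian then -∑ i, h.eigenvalues i * Real.logb 2 (h.eigenvalues i) else 0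

/-- Reduced density matrix of a pure state `ψ` on a bipartite system, obtained by
tracing out the second factor. -/
noncomputable def redDM {m p : Type*} [Fintype m] [Fintype p]
    (ψ : m × p → ℂ) : Matrix m m ℂ :=
  Matrix.of fun x y => ∑ z, ψ (x, z) * star (ψ (y, z))

/-- Entanglement across the `aA : Bb` cut of a pure state of `a, A, B, b`:
the entropy of the reduced state on `aA`. -/
noncomputable def entE {a A B b : ℕ}
    (ψ : (Fin a × Fin A) × (Fin B × Fin b) → ℂ) : ℝ :=
  vnEntropy (redDM ψ)

/-- The action of `I_a ⊗ U ⊗ I_b` on a state of `a, A, B, b`. -/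
noncomputable def applyU {a A B b : ℕ}
    (U : Matrix (Fin A × Fin B) (Fin A × Fin B) ℂ)
    (ψ : (Fin a × Fin A) × (Fin B × Fin b) → ℂ) :
    (Fin a × Fin A) × (Fin B × Fin b) → ℂ :=
  fun x => ∑ p : Fin A × Fin B, U (x.1.2, x.2.1) p * ψ ((x.1.1, p.1), (p.2, x.2.2))

/-- `ψ` is a unit vector. -/
def IsUnitVec {d : Type*} [Fintype d] (ψ : d → ℂ) : Prop :=
  ∑ x, ‖ψ x‖ ^ 2 = 1

/-- Entangling power `E^↑(U)`: the supremum over ancilla dimensions `a, b ≥ 1` and unit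
input states of the entanglement increase produced by `I_a ⊗ U ⊗ I_b`. -/
noncomputable def entPower {A B : ℕ}
    (U : Matrix (Fin A × Fin B) (Fin A × Fin B) ℂ) : ℝ :=
  sSup {r : ℝ | ∃ (a b : ℕ), 0 < a ∧ 0 < b ∧
    ∃ ψ : (Fin a × Fin A) × (Fin B × Fin b) → ℂ, IsUnitVec ψ ∧
      r = entE (applyU U ψ) - entE ψ}

/-- Disentangling power `E^↓(U) = E^↑(U†)`. -/
noncomputable def disPower {A B : ℕ}
    (U : Matrix (Fin A × Fin B) (Fin A × Fin B) ℂ) : ℝ :=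
  entPower Uᴴ

open Kronecker

/-- The Pauli matrix `σ_x`. -/
def sigmaX : Matrix (Fin 2) (Fin 2) ℂ := !![0, 1; 1, 0]

/-- The Pauli matrix `σ_y`. -/
def sigmaY : Matrix (Fin 2) (Fin 2) ℂ := !![0, -Complex.I; Complex.I, 0]

/-- The Pauli matrix `σ_z`. -/
def sigmaZ : Matrix (Fin 2) (Fin 2) ℂ := !![1, 0; 0, -1]

/-- The two-qubit gate `exp(i(α σ_x⊗σ_x + β σ_y⊗σ_y + γ σ_z⊗σ_z))`. -/
noncomputable def twoQubitGate (α β γ : ℝ) :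
    Matrix (Fin 2 × Fin 2) (Fin 2 × Fin 2) ℂ :=
  NormedSpace.exp (Complex.I • ((α : ℂ) • (sigmaX ⊗ₖ sigmaX) +
    (β : ℂ) • (sigmaY ⊗ₖ sigmaY) + (γ : ℂ) • (sigmaZ ⊗ₖ sigmaZ)))

/-! The gate is a symmetric matrix, so its adjoint is its entrywise complex conjugate. Conjugating
the input state of `I ⊗ conj U ⊗ I` conjugates the output state; conjugation preserves the norm and
transposes the reduced density matrices, which leaves their spectra, hence the entropies, unchanged.
So `conj U` and `U` achieve the same entanglement gains, and `E↓(U) = E↑(conj U) = E↑(U)`. -/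

open Matrix

theorem vnEntropy_transpose {n : Type*} [Fintype n] [DecidableEq n] (ρ : Matrix n n ℂ) :
    vnEntropy ρᵀ = vnEntropy ρ := by
  unfold vnEntropy
  by_cases hρ : ρ.IsHermitian
  · rw [dif_pos hρ.transpose, dif_pos hρ,
      (hρ.transpose.eigenvalues_eq_eigenvalues_iff hρ).2 (charpoly_transpose ρ)]
  · rw [dif_neg (mt isHermitian_transpose_iff.1 hρ), dif_neg hρ]

theorem redDM_star {m p : Type*} [Fintype m] [Fintype p] (ψ : m × p → ℂ) :
    redDM (star ψ) = (redDM ψ)ᵀ := by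
  ext x y
  simp only [redDM, of_apply, transpose_apply, Pi.star_apply, star_star]
  exact Finset.sum_congr rfl fun z _ => mul_comm _ _

theorem entE_star {a A B b : ℕ} (ψ : (Fin a × Fin A) × (Fin B × Fin b) → ℂ) :
    entE (star ψ) = entE ψ := by
  rw [entE, redDM_star, vnEntropy_transpose, entE]

theorem isUnitVec_star_iff {d : Type*} [Fintype d] (ψ : d → ℂ) :
    IsUnitVec (star ψ) ↔ IsUnitVec ψ := by
  simp only [IsUnitVec, Pi.star_apply, norm_star]

theorem applyU_map_star {a A B b : ℕ} (U : Matrix (Fin A × Fin B) (Fin A × Fin B) ℂ)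
    (ψ : (Fin a × Fin A) × (Fin B × Fin b) → ℂ) :
    applyU (U.map star) (star ψ) = star (applyU U ψ) := by
  funext x
  simp only [applyU, map_apply, Pi.star_apply, star_sum, star_mul']

def entanglingGains {A B : ℕ} (U : Matrix (Fin A × Fin B) (Fin A × Fin B) ℂ) : Set ℝ :=
  {r : ℝ | ∃ (a b : ℕ), 0 < a ∧ 0 < b ∧
    ∃ ψ : (Fin a × Fin A) × (Fin B × Fin b) → ℂ, IsUnitVec ψ ∧
      r = entE (applyU U ψ) - entE ψ}

theorem entPower_eq_sSup_entanglingGains {A B : ℕ}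
    (U : Matrix (Fin A × Fin B) (Fin A × Fin B) ℂ) :
    entPower U = sSup (entanglingGains U) :=
  rfl

theorem entanglingGains_map_star_subset {A B : ℕ}
    (U : Matrix (Fin A × Fin B) (Fin A × Fin B) ℂ) :
    entanglingGains (U.map star) ⊆ entanglingGains U := by
  rintro r ⟨a, b, ha, hb, ψ, hψ, rfl⟩
  refine ⟨a, b, ha, hb, star ψ, (isUnitVec_star_iff ψ).2 hψ, ?_⟩
  rw [← entE_star (applyU U (star ψ)), ← applyU_map_star, star_star, entE_star]

theorem entanglingGains_map_star {A B : ℕ} (U : Matrix (Fin A × Fin B) (Fin A × Fin B) ℂ) :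
    entanglingGains (U.map star) = entanglingGains U := by
  refine Set.Subset.antisymm (entanglingGains_map_star_subset U) ?_
  simpa only [map_map, star_involutive.comp_self, map_id] using
    entanglingGains_map_star_subset (U.map star)

theorem disPower_eq_entPower_of_isSymm {A B : ℕ}
    {U : Matrix (Fin A × Fin B) (Fin A × Fin B) ℂ} (hU : U.IsSymm) :
    disPower U = entPower U := by
  rw [disPower, conjTranspose, hU.eq, entPower_eq_sSup_entanglingGains,
    entanglingGains_map_star, entPower_eq_sSup_entanglingGains]

theorem Matrix.IsSymm.kronecker {R m n : Type*} [Mul R] {A : Matrix m m R} {B : Matrix n n R}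
    (hA : A.IsSymm) (hB : B.IsSymm) : (A ⊗ₖ B).IsSymm := by
  rw [IsSymm, ← kroneckerMap_transpose, hA.eq, hB.eq]

theorem isSymm_kronecker_of_transpose_eq_neg {R m n : Type*} [Ring R]
    {A : Matrix m m R} {B : Matrix n n R} (hA : Aᵀ = -A) (hB : Bᵀ = -B) : (A ⊗ₖ B).IsSymm := by
  rw [IsSymm, ← kroneckerMap_transpose, hA, hB]
  ext
  simp only [kroneckerMap_apply, Matrix.neg_apply, neg_mul_neg]

theorem sigmaX_isSymm : sigmaX.IsSymm := by
  ext i j; fin_cases i <;> fin_cases j <;> rfl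

theorem sigmaY_transpose : sigmaYᵀ = -sigmaY := by
  ext i j; fin_cases i <;> fin_cases j <;> simp [sigmaY]

theorem sigmaZ_isSymm : sigmaZ.IsSymm := by
  ext i j; fin_cases i <;> fin_cases j <;> rfl

theorem twoQubitGate_isSymm (α β γ : ℝ) : (twoQubitGate α β γ).IsSymm := by
  have hXX := sigmaX_isSymm.kronecker sigmaX_isSymm
  have hYY := isSymm_kronecker_of_transpose_eq_neg sigmaY_transpose sigmaY_transpose
  have hZZ := sigmaZ_isSymm.kronecker sigmaZ_isSymm
  exact ((((hXX.smul _).add (hYY.smul _)).add (hZZ.smul _)).smul _).exp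

/-- Every two-qubit gate of the form
`exp(i(α σ_x⊗σ_x + β σ_y⊗σ_y + γ σ_z⊗σ_z))` has equal entangling and
disentangling power. -/
theorem twoQubitGate_entPower_eq_disPower (α β γ : ℝ) :
    entPower (twoQubitGate α β γ) = disPower (twoQubitGate α β γ) :=
  (disPower_eq_entPower_of_isSymm (twoQubitGate_isSymm α β γ)).symm
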